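/- arXiv:2002.01682 — 2 statements merged into one kernel-verified Lean document; each statement's English description precedes it below -/
import Mathlib

section
/- Shifted FOM residual colinearity: assume the Arnoldi decomposition A V_m = V_m H_m + h_{m+1,m} v_{m+1} e_m^T with b = β V_m e₁, and for t ≥ 0 such that H_m + tI is invertible define x_m(t) = β V_m (H_m + tI)⁻¹ e₁ and r_m(t) = b − (A + tI) x_m(t). Then r_m(t) = ρ_m(t) v_{m+1}, where ρ_m(t) = −β h_{m+1,m} e_m^T (H_m + tI)⁻¹ e₁; in particular all shifted residuals are colinear with v_{m+1}. -/
/-! Applied to `y = (H + tI)⁻¹ e₁`, the Arnoldi relation gives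
`(A + tI) V y = V (H + tI) y + h (eₘᵀ y) v = V e₁ + h (eₘᵀ y) v`; since `b = β V e₁`, only the
rank-one term along `v` survives in the residual. -/

open Matrix

section Arnoldi

variable {R n k : Type*} [CommRing R] [Fintype n] [Fintype k]
  {A : Matrix n n R} {V : Matrix n k R} {H : Matrix k k R} {v : n → R} {w : k → R} {h : R}

theorem mulVec_mulVec_of_arnoldi (harn : A * V = V * H + h • vecMulVec v w) (y : k → R) :
    A *ᵥ (V *ᵥ y) = V *ᵥ (H *ᵥ y) + (h * (w ⬝ᵥ y)) • v := by
  rw [mulVec_mulVec, harn, add_mulVec, ← mulVec_mulVec, smul_mulVec, vecMulVec_mulVec,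
    op_smul_eq_smul, smul_smul]

theorem shift_mulVec_mulVec_of_arnoldi [DecidableEq n] [DecidableEq k]
    (harn : A * V = V * H + h • vecMulVec v w) (s : R) (y : k → R) :
    (A + s • 1) *ᵥ (V *ᵥ y) = V *ᵥ ((H + s • 1) *ᵥ y) + (h * (w ⬝ᵥ y)) • v := by
  rw [add_mulVec, mulVec_mulVec_of_arnoldi harn, add_mulVec, mulVec_add, smul_mulVec,
    smul_mulVec, one_mulVec, one_mulVec, mulVec_smul]
  module

theorem sub_shift_mulVec_eq_smul_of_arnoldi [DecidableEq n] [DecidableEq k]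
    (harn : A * V = V * H + h • vecMulVec v w) (β s : R) {e y : k → R}
    (hy : (H + s • 1) *ᵥ y = e) :
    β • V *ᵥ e - (A + s • 1) *ᵥ (β • V *ᵥ y) = -(β * h * (w ⬝ᵥ y)) • v := by
  rw [mulVec_smul, shift_mulVec_mulVec_of_arnoldi harn, hy, smul_add, smul_smul]
  module

end Arnoldi

/-- Shifted FOM residual colinearity: with an Arnoldi decomposition and
`x_m(t) = β V (H + tI)⁻¹ e₁`, the residual `r_m(t) = b − (A + tI) x_m(t)`
satisfies `r_m(t) = ρ_m(t) v_{m+1}` with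
`ρ_m(t) = −β h_{m+1,m} eₘᵀ (H + tI)⁻¹ e₁`. -/
theorem stmt7 {N m : ℕ} (hm : 0 < m) (A : Matrix (Fin N) (Fin N) ℂ)
    (V : Matrix (Fin N) (Fin m) ℂ) (H : Matrix (Fin m) (Fin m) ℂ)
    (v : Fin N → ℂ) (h : ℂ) (β : ℝ) (b : Fin N → ℂ)
    (hb : b = (β : ℂ) • V.mulVec (Pi.single ⟨0, hm⟩ 1))
    (harn : A * V = V * H + h • Matrix.vecMulVec v (Pi.single (⟨m - 1, by omega⟩ : Fin m) 1))
    (t : ℝ)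
    (hinv : IsUnit (H + (t : ℂ) • (1 : Matrix (Fin m) (Fin m) ℂ)).det) :
    b - (A + (t : ℂ) • (1 : Matrix (Fin N) (Fin N) ℂ)).mulVec
        ((β : ℂ) • V.mulVec ((H + (t : ℂ) • 1)⁻¹.mulVec (Pi.single ⟨0, hm⟩ 1))) =
      (-(β : ℂ) * h * ((H + (t : ℂ) • 1)⁻¹.mulVec (Pi.single ⟨0, hm⟩ 1)) ⟨m - 1, by omega⟩) • v := by
  have hsolve : (H + (t : ℂ) • 1) *ᵥ ((H + (t : ℂ) • 1)⁻¹ *ᵥ Pi.single ⟨0, hm⟩ 1) =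
      Pi.single ⟨0, hm⟩ 1 := by
    rw [mulVec_mulVec, mul_nonsing_inv _ hinv, one_mulVec]
  rw [hb, sub_shift_mulVec_eq_smul_of_arnoldi harn _ _ hsolve, single_one_dotProduct, neg_mul,
    neg_mul]
end

section
/- Hermite-type integral error formula for polynomial interpolation: let f be analytic on an open set Ω, Γ ⊂ Ω a contour winding once around a compact set Σ ⊂ interior of Γ, σ₀,...,σ_m points in Σ, w_m(z) = Π_{k=0}^m (z − σ_k), and p_m the interpolating polynomial of f at the σ_k. Then for every z ∈ Σ, f(z) − p_m(z) = (1/(2πi)) ∮_Γ f(ζ)/(ζ−z) · w_m(z)/w_m(ζ) dζ. -/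
/-!
For `ζ` off the nodes, `x ↦ (w(ζ) - w(x)) / ((ζ - x) w(ζ))` is a polynomial of degree `≤ m`
taking the value `1 / (ζ - σₖ)` at each node, hence it is the interpolant of `1 / (ζ - ·)`.
This gives the partial fraction decomposition
`w(z) / ((ζ - z) w(ζ)) = 1 / (ζ - z) - ∑ₖ ℓₖ(z) / (ζ - σₖ)` with the Lagrange basis `ℓₖ`.
Multiplying by `f(ζ)` and integrating, Cauchy's formula at `z` and at each node turns the
right-hand side into `2πi (f(z) - ∑ₖ f(σₖ) ℓₖ(z)) = 2πi (f(z) - p(z))`.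
-/

open Polynomial Lagrange Complex Metric Real

theorem Polynomial.degree_divByMonic_X_sub_C_lt {F : Type*} [Field F] {p : F[X]} {n : ℕ}
    (hp : p.degree ≤ n) (a : F) : (p /ₘ (X - C a)).degree < n := by
  rcases eq_or_ne p 0 with rfl | hp0
  · simp
  · exact (degree_divByMonic_lt p _ hp0 (by simp)).trans_le hp

theorem Lagrange.sub_mul_eval_interpolate_inv_sub {F ι : Type*} [Field F] [DecidableEq ι]
    {s : Finset ι} {v : ι → F} (hvs : Set.InjOn v s) {ζ : F} (hζ : eval ζ (nodal s v) ≠ 0)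
    (x : F) :
    (ζ - x) * eval x (interpolate s v fun i => (ζ - v i)⁻¹) =
      1 - eval x (nodal s v) / eval ζ (nodal s v) := by
  set w := nodal s v
  set Q := (w - C (eval ζ w)) /ₘ (X - C ζ)
  have hQ : (X - C ζ) * Q = w - C (eval ζ w) := mul_divByMonic_eq_iff_isRoot.2 (by simp)
  have hQ_eval (y : F) : (y - ζ) * eval y Q = eval y w - eval ζ w := by
    simpa using congrArg (eval y) hQ
  have hdeg : (w - C (eval ζ w)).degree ≤ s.card :=
    (degree_sub_le _ _).trans (max_le degree_nodal.le (degree_C_le.trans (by simp)))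
  have hinterp : C (eval ζ w)⁻¹ * Q = interpolate s v fun i => (ζ - v i)⁻¹ := by
    refine eq_interpolate_of_eval_eq _ hvs ?_ fun i hi => ?_
    · rw [degree_C_mul (inv_ne_zero hζ)]
      exact degree_divByMonic_X_sub_C_lt hdeg ζ
    · have hζi : ζ - v i ≠ 0 :=
        fun h => hζ (by rw [sub_eq_zero.1 h]; exact eval_nodal_at_node hi)
      have := hQ_eval (v i)
      rw [eval_nodal_at_node hi] at this
      rw [eval_mul, eval_C]
      field_simp
      linear_combination -this
  rw [← hinterp, eval_mul, eval_C]
  field_simp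
  linear_combination -hQ_eval x

theorem DiffContOnCl.circleIntegral_div_sub_mul_eval_nodal_div {f : ℂ → ℂ} {c z : ℂ} {R : ℝ}
    (hf : DiffContOnCl ℂ f (ball c R)) {ι : Type*} [DecidableEq ι] {s : Finset ι} {v : ι → ℂ}
    (hvs : Set.InjOn v s) (hv : ∀ i ∈ s, v i ∈ ball c R) (hz : z ∈ ball c R) :
    (∮ ζ in C(c, R), f ζ / (ζ - z) * (eval z (nodal s v) / eval ζ (nodal s v))) =
      2 * π * I * (f z - eval z (interpolate s v (f ∘ v))) := by
  have hR : 0 < R := pos_of_mem_ball hz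
  have hsub_ne {a ζ : ℂ} (ha : a ∈ ball c R) (hζ : ζ ∈ sphere c R) : ζ - a ≠ 0 :=
    sub_ne_zero.2 (sphere_disjoint_ball.ne_of_mem hζ ha)
  have hfc : ContinuousOn f (sphere c R) :=
    hf.continuousOn.mono (sphere_subset_closedBall.trans (closure_ball c hR.ne').ge)
  have hint {a : ℂ} (ha : a ∈ ball c R) : CircleIntegrable (fun ζ => f ζ / (ζ - a)) c R :=
    (hfc.div (continuousOn_id.sub continuousOn_const) fun ζ hζ => hsub_ne ha hζ).circleIntegrable
      hR.le
  have hint_mul (b : ℂ) {a : ℂ} (ha : a ∈ ball c R) :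
      CircleIntegrable (fun ζ => b * (f ζ / (ζ - a))) c R :=
    (hint ha).const_smul
  have hcauchy {a : ℂ} (ha : a ∈ ball c R) :
      (∮ ζ in C(c, R), f ζ / (ζ - a)) = 2 * π * I * f a := by
    simpa only [smul_eq_mul, div_eq_inv_mul] using hf.circleIntegral_sub_inv_smul ha
  have hpartial : Set.EqOn (fun ζ => f ζ / (ζ - z) * (eval z (nodal s v) / eval ζ (nodal s v)))
      (fun ζ => f ζ / (ζ - z) - ∑ i ∈ s, eval z (Lagrange.basis s v i) * (f ζ / (ζ - v i)))
      (sphere c R) := by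
    intro ζ hζ
    have hw : eval ζ (nodal s v) ≠ 0 :=
      eval_nodal_not_at_node fun i hi => sub_ne_zero.1 (hsub_ne (hv i hi) hζ)
    have key := sub_mul_eval_interpolate_inv_sub hvs hw z
    simp only [interpolate_apply, eval_finsetSum, eval_mul, eval_C] at key
    have hsum : ∑ i ∈ s, eval z (Lagrange.basis s v i) * (f ζ / (ζ - v i)) =
        f ζ * ∑ i ∈ s, (ζ - v i)⁻¹ * eval z (Lagrange.basis s v i) := by
      rw [Finset.mul_sum]
      exact Finset.sum_congr rfl fun i _ => by ring
    have hratio : eval z (nodal s v) / eval ζ (nodal s v) =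
        1 - (ζ - z) * ∑ i ∈ s, (ζ - v i)⁻¹ * eval z (Lagrange.basis s v i) := by
      linear_combination key
    have hζz := hsub_ne hz hζ
    dsimp only
    rw [hsum, hratio]
    field_simp
  rw [circleIntegral.integral_congr hR.le hpartial, circleIntegral.integral_sub (hint hz)
    (.fun_sum _ fun i hi => hint_mul _ (hv i hi)),
    circleIntegral.integral_fun_sum fun i hi => hint_mul _ (hv i hi)]
  simp only [circleIntegral.integral_const_mul, hcauchy hz, interpolate_apply, eval_finsetSum,
    eval_mul, eval_C]
  rw [Finset.sum_congr rfl fun i hi => congrArg _ (hcauchy (hv i hi)), mul_sub, Finset.mul_sum]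
  congr 1
  exact Finset.sum_congr rfl fun i _ => by simp only [Function.comp_apply]; ring

theorem stmt17_general (Ω : Set ℂ) (f : ℂ → ℂ)
    (hf : DifferentiableOn ℂ f Ω)
    (c : ℂ) (R : ℝ) (hΓΩ : Metric.closedBall c R ⊆ Ω)
    (S : Set ℂ) (hSball : S ⊆ Metric.ball c R)
    (m : ℕ) (σ : Fin (m + 1) → ℂ) (hmem : ∀ k, σ k ∈ S)
    (hinj : Function.Injective σ)
    (p : Polynomial ℂ) (hdeg : p.degree ≤ m)
    (hinterp : ∀ k, p.eval (σ k) = f (σ k)) :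
    ∀ z ∈ S, f z - p.eval z =
      (2 * Real.pi * Complex.I)⁻¹ *
        ∮ ζ in C(c, R), f ζ / (ζ - z) *
          ((∏ k, (z - σ k)) / (∏ k, (ζ - σ k))) := by
  intro z hz
  have hp : p = interpolate Finset.univ σ (f ∘ σ) :=
    eq_interpolate_of_eval_eq _ hinj.injOn
      (hdeg.trans_lt (by rw [Finset.card_univ, Fintype.card_fin]; exact_mod_cast m.lt_succ_self))
      fun k _ => hinterp k
  have hermite := (hf.diffContOnCl_ball hΓΩ).circleIntegral_div_sub_mul_eval_nodal_div
    (s := .univ) hinj.injOn (fun k _ => hSball (hmem k)) (hSball hz)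
  simp only [eval_nodal] at hermite
  rw [hermite, ← hp, ← mul_assoc, inv_mul_cancel₀ two_pi_I_ne_zero, one_mul]

/-- Hermite-type integral error formula for polynomial interpolation:
for `f` analytic on `Ω`, a circular contour `Γ = C(c,R)` in `Ω` containing the
compact set `Σ` in its interior, nodes `σ₀,…,σ_m ∈ Σ`, `w_m(z) = Π(z−σ_k)`,
and the interpolating polynomial `p_m`, for every `z ∈ Σ`:
`f(z) − p_m(z) = (1/(2πi)) ∮_Γ f(ζ)/(ζ−z) · w_m(z)/w_m(ζ) dζ`. -/
theorem stmt17 (Ω : Set ℂ) (hΩ : IsOpen Ω) (f : ℂ → ℂ)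
    (hf : DifferentiableOn ℂ f Ω)
    (c : ℂ) (R : ℝ) (hR : 0 < R) (hΓΩ : Metric.closedBall c R ⊆ Ω)
    (S : Set ℂ) (hS : IsCompact S) (hSball : S ⊆ Metric.ball c R)
    (m : ℕ) (σ : Fin (m + 1) → ℂ) (hmem : ∀ k, σ k ∈ S)
    (hinj : Function.Injective σ)
    (p : Polynomial ℂ) (hdeg : p.degree ≤ m)
    (hinterp : ∀ k, p.eval (σ k) = f (σ k)) :
    ∀ z ∈ S, f z - p.eval z =
      (2 * Real.pi * Complex.I)⁻¹ *
        ∮ ζ in C(c, R), f ζ / (ζ - z) *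
          ((∏ k, (z - σ k)) / (∏ k, (ζ - σ k))) :=
  stmt17_general Ω f hf c R hΓΩ S hSball m σ hmem hinj p hdeg hinterp
end
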